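/- arXiv:1602.08958 — 4 statements merged into one kernel-verified Lean document; each statement's English description precedes it below -/
import Mathlib

section
/- Fix pairwise distinct complex numbers a_1, …, a_n. For every subset I ⊆ {1,…,n} with |I| ≥ 2, the set H(I) = {s ∈ ℂⁿ : the lines ℓ(a_i, s_i), i ∈ I, have a common point in ℙ²(ℂ)} is a ℂ-linear subspace of ℂⁿ of dimension n − |I| + 2. -/
noncomputable section

/-- The complex projective plane `ℙ²(ℂ)`. -/
abbrev P2 : Type := Projectivization ℂ (Fin 3 → ℂ)

/-- The line `{[x0:x1:x2] ∈ ℙ²(ℂ) : b0·x0 + b1·x1 + b2·x2 = 0}` determined by the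
linear form with coefficients `b`. -/
def lineSet (b : Fin 3 → ℂ) : Set P2 :=
  {p : P2 | b 0 * p.rep 0 + b 1 * p.rep 1 + b 2 * p.rep 2 = 0}

/-- The line `ℓ(a,s) = {[x0:x1:x2] ∈ ℙ²(ℂ) : x1 − a·x2 + s·x0 = 0}`. -/
def lineL (a s : ℂ) : Set P2 := lineSet ![s, 1, -a]

/-- `H(I) = {s ∈ ℂⁿ : the lines ℓ(a_i, s_i), i ∈ I, are concurrent}`. -/
def Hset {n : ℕ} (a : Fin n → ℂ) (I : Finset (Fin n)) : Set (Fin n → ℂ) :=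
  {s | ∃ p : P2, ∀ i ∈ I, p ∈ lineL (a i) (s i)}

/-!
The lines `ℓ(a_i, s_i)`, `i ∈ I`, pass through `[1 : -c : d]` exactly when `s_i = c + d·a_i`
for all `i ∈ I`, and every common point is of this form: it cannot lie on the line at infinity
`x0 = 0`, because two of the slopes `a_i` differ. Hence `H(I)` is the preimage of the plane
`span {1, a|_I} ⊆ ℂ^I` under restriction `ℂⁿ → ℂ^I`, which has dimension `(n - |I|) + 2`.
-/

open Module Projectivization

theorem finrank_comap_add_finrank_of_surjective {K V W : Type*} [Field K]
    [AddCommGroup V] [Module K V] [FiniteDimensional K V] [AddCommGroup W] [Module K W]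
    {f : V →ₗ[K] W} (hf : Function.Surjective f) (p : Submodule K W) :
    finrank K (p.comap f) + finrank K W = finrank K V + finrank K p := by
  have hW : FiniteDimensional K W := .of_surjective f hf
  have hker : LinearMap.ker (p.mkQ ∘ₗ f) = p.comap f := by
    rw [LinearMap.ker_comp, Submodule.ker_mkQ]
  have hrange : LinearMap.range (p.mkQ ∘ₗ f) = ⊤ :=
    LinearMap.range_eq_top.mpr (p.mkQ_surjective.comp hf)
  have := LinearMap.finrank_range_add_finrank_ker (p.mkQ ∘ₗ f)
  rw [hker, hrange, finrank_top] at this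
  have := p.finrank_quotient_add_finrank
  omega

theorem finrank_span_one_pair_eq_two {K ι : Type*} [Field K] {x : ι → K} {i j : ι}
    (hij : x i ≠ x j) : finrank K (Submodule.span K {1, x}) = 2 := by
  have hli : LinearIndependent K ![1, x] := by
    refine LinearIndependent.pair_iff.mpr fun s t hst => ?_
    have hi := congrFun hst i
    have hj := congrFun hst j
    simp only [Pi.add_apply, Pi.smul_apply, Pi.one_apply, smul_eq_mul, mul_one,
      Pi.zero_apply] at hi hj
    have ht : t = 0 := by
      have : t * (x i - x j) = 0 := by linear_combination hi - hj
      exact (mul_eq_zero.mp this).resolve_right (sub_ne_zero.mpr hij)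
    subst ht
    exact ⟨by simpa using hi, rfl⟩
  rw [← Matrix.range_cons_cons_empty 1 x ![], finrank_span_eq_card hli, Fintype.card_fin]

theorem mk_mem_lineL_iff {a s : ℂ} {v : Fin 3 → ℂ} (hv : v ≠ 0) :
    mk ℂ v hv ∈ lineL a s ↔ s * v 0 + v 1 - a * v 2 = 0 := by
  obtain ⟨t, ht⟩ := exists_smul_eq_mk_rep ℂ v hv
  simp only [lineL, lineSet, Set.mem_ofPred_eq, ← ht, Pi.smul_apply, Units.smul_def,
    smul_eq_mul, Matrix.cons_val_zero, Matrix.cons_val_one, Matrix.cons_val_two,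
    Matrix.head_cons, Matrix.tail_cons]
  constructor
  · intro h
    have : (t : ℂ) * (s * v 0 + v 1 - a * v 2) = 0 := by linear_combination h
    exact (mul_eq_zero.mp this).resolve_left t.ne_zero
  · intro h
    linear_combination (t : ℂ) * h

-- Lines of distinct slopes do not meet on the line at infinity `x0 = 0`.
theorem coord_zero_ne_zero_of_slope_ne {a₁ a₂ s₁ s₂ : ℂ} (ha : a₁ ≠ a₂) {v : Fin 3 → ℂ}
    (hv : v ≠ 0) (h₁ : s₁ * v 0 + v 1 - a₁ * v 2 = 0) (h₂ : s₂ * v 0 + v 1 - a₂ * v 2 = 0) :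
    v 0 ≠ 0 := by
  intro h₀
  have h₂' : v 2 = 0 := by
    have : (a₁ - a₂) * v 2 = 0 := by linear_combination (s₁ - s₂) * h₀ - h₁ + h₂
    exact (mul_eq_zero.mp this).resolve_left (sub_ne_zero.mpr ha)
  have h₁' : v 1 = 0 := by linear_combination h₁ - s₁ * h₀ + a₁ * h₂'
  exact hv (funext fun k => by fin_cases k <;> assumption)

variable {n : ℕ} (a : Fin n → ℂ) (I : Finset (Fin n))

def concurrencySubspace : Submodule ℂ (Fin n → ℂ) :=
  (Submodule.span ℂ {1, fun i : I => a i}).comap (LinearMap.funLeft ℂ ℂ ((↑) : I → Fin n))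

variable {a I}

theorem mem_concurrencySubspace_iff {s : Fin n → ℂ} :
    s ∈ concurrencySubspace a I ↔ ∃ c d : ℂ, ∀ i ∈ I, c + d * a i = s i := by
  simp only [concurrencySubspace, Submodule.mem_comap, Submodule.mem_span_pair, funext_iff,
    Subtype.forall, Pi.add_apply, Pi.smul_apply, Pi.one_apply, smul_eq_mul, mul_one,
    LinearMap.funLeft_apply]

theorem coe_concurrencySubspace (h : ∃ i ∈ I, ∃ j ∈ I, a i ≠ a j) :
    (concurrencySubspace a I : Set (Fin n → ℂ)) = Hset a I := by
  ext s
  rw [SetLike.mem_coe, mem_concurrencySubspace_iff]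
  constructor
  · rintro ⟨c, d, hs⟩
    have hv : (![1, -c, d] : Fin 3 → ℂ) ≠ 0 := fun h => by simpa using congrFun h 0
    refine ⟨mk ℂ _ hv, fun i hi => (mk_mem_lineL_iff hv).mpr ?_⟩
    simp only [Matrix.cons_val_zero, Matrix.cons_val_one, Matrix.cons_val_two,
      Matrix.head_cons, Matrix.tail_cons]
    linear_combination -hs i hi
  · rintro ⟨p, hp⟩
    rw [← mk_rep p] at hp
    set v := p.rep
    have hv : ∀ i ∈ I, s i * v 0 + v 1 - a i * v 2 = 0 := fun i hi =>
      (mk_mem_lineL_iff p.rep_nonzero).mp (hp i hi)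
    obtain ⟨i, hi, j, hj, hij⟩ := h
    have h₀ : v 0 ≠ 0 := coord_zero_ne_zero_of_slope_ne hij p.rep_nonzero (hv i hi) (hv j hj)
    refine ⟨-v 1 / v 0, v 2 / v 0, fun k hk => ?_⟩
    field_simp
    linear_combination -hv k hk

theorem finrank_concurrencySubspace (h : ∃ i ∈ I, ∃ j ∈ I, a i ≠ a j) :
    finrank ℂ (concurrencySubspace a I) = n - I.card + 2 := by
  obtain ⟨i, hi, j, hj, hij⟩ := h
  have hdim : finrank ℂ (concurrencySubspace a I) + I.card = n + 2 := by
    have := finrank_comap_add_finrank_of_surjective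
      (LinearMap.funLeft_surjective_of_injective ℂ ℂ _ Subtype.val_injective)
      (Submodule.span ℂ {1, fun k : I => a k})
    rwa [finrank_span_one_pair_eq_two (i := ⟨i, hi⟩) (j := ⟨j, hj⟩) hij, finrank_fin_fun,
      finrank_pi, Fintype.card_coe] at this
  have hI : I.card ≤ n := by simpa using I.card_le_univ
  omega

/-- for pairwise distinct `a_1, …, a_n ∈ ℂ` and `I ⊆ {1,…,n}` with
`|I| ≥ 2`, the set `H(I)` is a `ℂ`-linear subspace of `ℂⁿ` of dimension
`n − |I| + 2`. -/
theorem stmt6 (n : ℕ) (a : Fin n → ℂ) (ha : Function.Injective a)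
    (I : Finset (Fin n)) (hI : 2 ≤ I.card) :
    ∃ W : Submodule ℂ (Fin n → ℂ),
      (W : Set (Fin n → ℂ)) = Hset a I ∧ Module.finrank ℂ W = n - I.card + 2 := by
  obtain ⟨i, hi, j, hj, hij⟩ := Finset.one_lt_card.mp hI
  have h : ∃ i ∈ I, ∃ j ∈ I, a i ≠ a j := ⟨i, hi, j, hj, ha.ne hij⟩
  exact ⟨concurrencySubspace a I, coe_concurrencySubspace h, finrank_concurrencySubspace h⟩
end
end

section
/- Fix pairwise distinct complex numbers a_1, …, a_n and finitely many subsets I_1, …, I_m of {1,…,n}, each of size at least 2. Then there exist subsets J_1, …, J_s of {1,…,n} such that: each J_p is a union of some of the sets I_j; every I_j is contained in some J_p; |J_p ∩ J_q| ≤ 1 for all p ≠ q; and ⋂_{j=1}^{m} H(I_j) = ⋂_{p=1}^{s} H(J_p). -/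
noncomputable section

-- auxiliary: first coordinate nonzero
lemma coord0_ne {ax ay sx sy : ℂ} (h : ax ≠ ay) {u : Fin 3 → ℂ} (hu : u ≠ 0)
    (h1 : sx * u 0 + u 1 - ax * u 2 = 0) (h2 : sy * u 0 + u 1 - ay * u 2 = 0) :
    u 0 ≠ 0 := by
  intro h0
  have hd : ax - ay ≠ 0 := sub_ne_zero.mpr h
  have hu2 : u 2 = 0 := by
    have e : (ax - ay) * u 2 = 0 := by linear_combination h2 - h1 + (sx - sy) * h0
    exact (mul_eq_zero.mp e).resolve_left hd
  have hu1 : u 1 = 0 := by linear_combination h1 - sx * h0 + ax * hu2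
  apply hu
  funext i
  fin_cases i <;> assumption

lemma line_inter_unique {ax ay sx sy : ℂ} (h : ax ≠ ay) {p q : P2}
    (hp1 : p ∈ lineL ax sx) (hp2 : p ∈ lineL ay sy)
    (hq1 : q ∈ lineL ax sx) (hq2 : q ∈ lineL ay sy) : p = q := by
  simp only [lineL, lineSet, Set.mem_setOf_eq, Matrix.cons_val_zero, Matrix.cons_val_one,
    Matrix.head_cons, Matrix.cons_val_two, Matrix.tail_cons, one_mul, neg_mul] at hp1 hp2 hq1 hq2
  have hp1' : sx * p.rep 0 + p.rep 1 - ax * p.rep 2 = 0 := by linear_combination hp1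
  have hp2' : sy * p.rep 0 + p.rep 1 - ay * p.rep 2 = 0 := by linear_combination hp2
  have hq1' : sx * q.rep 0 + q.rep 1 - ax * q.rep 2 = 0 := by linear_combination hq1
  have hq2' : sy * q.rep 0 + q.rep 1 - ay * q.rep 2 = 0 := by linear_combination hq2
  have hu0 := coord0_ne h p.rep_nonzero hp1' hp2'
  have hv0 := coord0_ne h q.rep_nonzero hq1' hq2'
  have hd : ax - ay ≠ 0 := sub_ne_zero.mpr h
  have h20 : q.rep 2 * p.rep 0 = p.rep 2 * q.rep 0 := by
    apply mul_left_cancel₀ hd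
    linear_combination q.rep 0 * (hp1' - hp2') - p.rep 0 * (hq1' - hq2')
  have h10 : q.rep 1 * p.rep 0 = p.rep 1 * q.rep 0 := by
    linear_combination p.rep 0 * hq1' - q.rep 0 * hp1' + ax * h20
  have key : (Units.mk0 (p.rep 0 / q.rep 0) (div_ne_zero hu0 hv0)) • q.rep = p.rep := by
    funext i
    fin_cases i
    · show (p.rep 0 / q.rep 0) * q.rep 0 = p.rep 0
      field_simp
    · show (p.rep 0 / q.rep 0) * q.rep 1 = p.rep 1
      field_simp
      linear_combination h10
    · show (p.rep 0 / q.rep 0) * q.rep 2 = p.rep 2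
      field_simp
      linear_combination h20
  conv_lhs => rw [← p.mk_rep]
  conv_rhs => rw [← q.mk_rep]
  rw [Projectivization.mk_eq_mk_iff]
  exact ⟨_, key⟩

lemma biUnion_union' {α β : Type*} [DecidableEq α] [DecidableEq β]
    (T₁ T₂ : Finset α) (f : α → Finset β) :
    (T₁ ∪ T₂).biUnion f = T₁.biUnion f ∪ T₂.biUnion f := by
  ext x
  simp only [Finset.mem_biUnion, Finset.mem_union]
  constructor
  · rintro ⟨a, h | h, hx⟩
    · exact Or.inl ⟨a, h, hx⟩
    · exact Or.inr ⟨a, h, hx⟩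
  · rintro (⟨a, h, hx⟩ | ⟨a, h, hx⟩)
    · exact ⟨a, Or.inl h, hx⟩
    · exact ⟨a, Or.inr h, hx⟩

lemma Hset_mono {n : ℕ} (a : Fin n → ℂ) {A B : Finset (Fin n)} (h : B ⊆ A) :
    Hset a A ⊆ Hset a B := fun s ⟨p, hp⟩ => ⟨p, fun i hi => hp i (h hi)⟩

lemma Hset_merge {n : ℕ} {a : Fin n → ℂ} (ha : Function.Injective a)
    {A B : Finset (Fin n)} (hAB : 2 ≤ (A ∩ B).card) {s : Fin n → ℂ}
    (hA : s ∈ Hset a A) (hB : s ∈ Hset a B) : s ∈ Hset a (A ∪ B) := by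
  obtain ⟨p, hp⟩ := hA
  obtain ⟨q, hq⟩ := hB
  obtain ⟨x, hx, y, hy, hxy⟩ := Finset.one_lt_card.mp hAB
  have hxA := (Finset.mem_inter.mp hx).1
  have hxB := (Finset.mem_inter.mp hx).2
  have hyA := (Finset.mem_inter.mp hy).1
  have hyB := (Finset.mem_inter.mp hy).2
  have hax : a x ≠ a y := fun h => hxy (ha h)
  have hpq : p = q := line_inter_unique hax (hp x hxA) (hp y hyA) (hq x hxB) (hq y hyB)
  exact ⟨p, fun i hi => (Finset.mem_union.mp hi).elim (hp i) (fun h => hpq ▸ hq i h)⟩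

/-- combinatorial reduction -/
lemma reduce {n m : ℕ} (a : Fin n → ℂ) (ha : Function.Injective a)
    (I : Fin m → Finset (Fin n)) :
    ∀ (k : ℕ) (𝒥 : Finset (Finset (Fin n))), 𝒥.card ≤ k →
    (∀ J ∈ 𝒥, ∃ T : Finset (Fin m), T.Nonempty ∧ J = T.biUnion I) →
    (∀ j, ∃ J ∈ 𝒥, I j ⊆ J) →
    ((⋂ j, Hset a (I j)) = ⋂ J ∈ 𝒥, Hset a J) →
    ∃ 𝒦 : Finset (Finset (Fin n)),
      (∀ J ∈ 𝒦, ∃ T : Finset (Fin m), T.Nonempty ∧ J = T.biUnion I) ∧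
      (∀ j, ∃ J ∈ 𝒦, I j ⊆ J) ∧
      (∀ J ∈ 𝒦, ∀ J' ∈ 𝒦, J ≠ J' → (J ∩ J').card ≤ 1) ∧
      ((⋂ j, Hset a (I j)) = ⋂ J ∈ 𝒦, Hset a J) := by
  intro k
  induction k with
  | zero =>
    intro 𝒥 hc h1 h2 h3
    have : 𝒥 = ∅ := Finset.card_eq_zero.mp (Nat.le_zero.mp hc)
    subst this
    exact ⟨∅, h1, h2, by simp, h3⟩
  | succ k ih =>
    intro 𝒥 hc h1 h2 h3
    by_cases hgood : ∀ J ∈ 𝒥, ∀ J' ∈ 𝒥, J ≠ J' → (J ∩ J').card ≤ 1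
    · exact ⟨𝒥, h1, h2, hgood, h3⟩
    · push_neg at hgood
      obtain ⟨J₁, hJ₁, J₂, hJ₂, hne, hbig⟩ := hgood
      set 𝒥' : Finset (Finset (Fin n)) := insert (J₁ ∪ J₂) ((𝒥.erase J₁).erase J₂) with h𝒥'
      have hcard : 𝒥'.card ≤ k := by
        have e2 : J₂ ∈ 𝒥.erase J₁ := Finset.mem_erase.mpr ⟨fun h => hne h.symm, hJ₂⟩
        have c1 : ((𝒥.erase J₁).erase J₂).card = 𝒥.card - 2 := by
          rw [Finset.card_erase_of_mem e2, Finset.card_erase_of_mem hJ₁]; omega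
        have h2le : 2 ≤ 𝒥.card := Finset.one_lt_card.mpr ⟨J₁, hJ₁, J₂, hJ₂, hne⟩
        calc 𝒥'.card ≤ ((𝒥.erase J₁).erase J₂).card + 1 := Finset.card_insert_le _ _
          _ = 𝒥.card - 2 + 1 := by rw [c1]
          _ ≤ k := by omega
      -- intersection equality for 𝒥'
      have hsub : ∀ J ∈ 𝒥', ∀ s ∈ ⋂ J ∈ 𝒥, Hset a J, s ∈ Hset a J := by
        intro J hJ s hs
        simp only [Set.mem_iInter] at hs
        rcases Finset.mem_insert.mp hJ with h | h
        · subst h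
          have h2 : 2 ≤ (J₁ ∩ J₂).card := hbig
          exact Hset_merge ha h2 (hs J₁ hJ₁) (hs J₂ hJ₂)
        · exact hs J (Finset.mem_of_mem_erase (Finset.mem_of_mem_erase h))
      have hsub' : ∀ J ∈ 𝒥, ∀ s ∈ ⋂ J ∈ 𝒥', Hset a J, s ∈ Hset a J := by
        intro J hJ s hs
        simp only [Set.mem_iInter] at hs
        by_cases h : J = J₁ ∨ J = J₂
        · have hu : s ∈ Hset a (J₁ ∪ J₂) := hs _ (Finset.mem_insert_self _ _)
          rcases h with h | h <;> subst h
          · exact Hset_mono a Finset.subset_union_left hu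
          · exact Hset_mono a Finset.subset_union_right hu
        · push_neg at h
          exact hs J (Finset.mem_insert_of_mem (Finset.mem_erase.mpr ⟨h.2,
              Finset.mem_erase.mpr ⟨h.1, hJ⟩⟩))
      have h3' : (⋂ j, Hset a (I j)) = ⋂ J ∈ 𝒥', Hset a J := by
        rw [h3]
        ext s
        simp only [Set.mem_iInter]
        constructor
        · intro hs J hJ
          exact hsub J hJ s (by simp only [Set.mem_iInter]; exact hs)
        · intro hs J hJ
          exact hsub' J hJ s (by simp only [Set.mem_iInter]; exact hs)
      apply ih 𝒥' hcard
      · intro J hJ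
        rcases Finset.mem_insert.mp hJ with h | h
        · obtain ⟨T₁, hT₁, e₁⟩ := h1 J₁ hJ₁
          obtain ⟨T₂, hT₂, e₂⟩ := h1 J₂ hJ₂
          exact ⟨T₁ ∪ T₂, hT₁.mono Finset.subset_union_left, by
            rw [h, e₁, e₂, biUnion_union']⟩
        · exact h1 J (Finset.mem_of_mem_erase (Finset.mem_of_mem_erase h))
      · intro j
        obtain ⟨J, hJ, hsubJ⟩ := h2 j
        by_cases h : J = J₁ ∨ J = J₂
        · refine ⟨J₁ ∪ J₂, Finset.mem_insert_self _ _, ?_⟩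
          rcases h with h | h <;> subst h
          · exact hsubJ.trans Finset.subset_union_left
          · exact hsubJ.trans Finset.subset_union_right
        · push_neg at h
          exact ⟨J, Finset.mem_insert_of_mem (Finset.mem_erase.mpr ⟨h.2,
            Finset.mem_erase.mpr ⟨h.1, hJ⟩⟩), hsubJ⟩
      · exact h3'

/-- given pairwise distinct `a_1, …, a_n ∈ ℂ` and subsets
`I_1, …, I_m ⊆ {1,…,n}` each of size at least 2, there are subsets
`J_1, …, J_s ⊆ {1,…,n}` such that each `J_p` is a union of some of the `I_j`,
every `I_j` is contained in some `J_p`, `|J_p ∩ J_q| ≤ 1` for `p ≠ q`, and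
`⋂_j H(I_j) = ⋂_p H(J_p)`. -/
theorem stmt8 (n m : ℕ) (a : Fin n → ℂ) (ha : Function.Injective a)
    (I : Fin m → Finset (Fin n)) (hI : ∀ j, 2 ≤ (I j).card) :
    ∃ (s : ℕ) (J : Fin s → Finset (Fin n)),
      (∀ p, ∃ T : Finset (Fin m), T.Nonempty ∧ J p = T.biUnion I) ∧
      (∀ j, ∃ p, I j ⊆ J p) ∧
      (∀ p q, p ≠ q → (J p ∩ J q).card ≤ 1) ∧
      (⋂ j, Hset a (I j)) = (⋂ p, Hset a (J p)) := by
  obtain ⟨𝒦, h1, h2, h3, h4⟩ := reduce a ha I (Finset.univ.image I).card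
    (Finset.univ.image I) le_rfl
    (by
      intro J hJ
      obtain ⟨j, _, hj⟩ := Finset.mem_image.mp hJ
      exact ⟨{j}, Finset.singleton_nonempty j, by rw [Finset.singleton_biUnion, hj]⟩)
    (fun j => ⟨I j, Finset.mem_image_of_mem I (Finset.mem_univ j), subset_rfl⟩)
    (by
      ext s
      simp only [Set.mem_iInter, Finset.mem_image]
      constructor
      · rintro hs J ⟨j, _, rfl⟩
        exact hs j
      · intro hs j
        exact hs (I j) ⟨j, Finset.mem_univ j, rfl⟩)
  refine ⟨𝒦.card, fun p => (𝒦.equivFin.symm p : Finset (Fin n)), ?_, ?_, ?_, ?_⟩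
  · intro p
    exact h1 _ (𝒦.equivFin.symm p).2
  · intro j
    obtain ⟨J, hJ, hsubJ⟩ := h2 j
    refine ⟨𝒦.equivFin ⟨J, hJ⟩, ?_⟩
    show I j ⊆ ↑(𝒦.equivFin.symm (𝒦.equivFin ⟨J, hJ⟩))
    rw [Equiv.symm_apply_apply]
    exact hsubJ
  · intro p q hpq
    apply h3 _ (𝒦.equivFin.symm p).2 _ (𝒦.equivFin.symm q).2
    intro h
    exact hpq (𝒦.equivFin.symm.injective (Subtype.coe_injective h))
  · rw [h4]
    ext s
    simp only [Set.mem_iInter]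
    constructor
    · intro hs p
      exact hs _ (𝒦.equivFin.symm p).2
    · intro hs J hJ
      have := hs (𝒦.equivFin ⟨J, hJ⟩)
      simp only [Equiv.symm_apply_apply] at this
      exact this
end
end

section
/- Let n ≥ 4 and let a_1, …, a_{n−3} be pairwise distinct complex numbers, each different from 0 and from 1. For s = (s_1,…,s_{n−2}) ∈ ℂ^{n−2} define the following n lines in ℙ²(ℂ): l_i(s) = {x1 − a_i·x2 + s_i·x0 = 0} for 1 ≤ i ≤ n−3; l_{n−2}(s) = {s_{n−2}·x0 + x1 = 0}; l_{n−1} = {x2 = 0}; l_n = {x1 − x2 = 0}; and let l_A = {x0 = 0}. Then for s, s' ∈ ℂ^{n−2}, there exists g ∈ SL(3,ℂ) whose induced action on ℙ²(ℂ) maps l_A to l_A and maps l_i(s) to l_i(s') for every i = 1, …, n, if and only if there exists λ ∈ ℂ ∖ {0} with s' = λ·s. -/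
/-! Encode a line by the row vector `b` of its coefficients. Then `g` maps `{b = 0}` onto
`{c = 0}` iff `c g` is a nonzero multiple of `b`. Fixing `l_A`, `{x2 = 0}` and `{x1 = x2}` forces
the rows of `g` to be `α e₀`, `δ e₁ + (γ - δ) e₂` and `γ e₂`, so `g` can only map
`{s x0 + x1 + y x2 = 0}` to `{s' x0 + x1 + y x2 = 0}` when `α s' = δ s`. Conversely,
`diag(d/λ, d, d)` with `d³ = λ` maps every line `{x x0 + y x1 + z x2 = 0}` to
`{λ x x0 + y x1 + z x2 = 0}`. -/

noncomputable section

/-- The group `SL(3,ℂ)`. -/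
abbrev SL3 : Type := Matrix.SpecialLinearGroup (Fin 3) ℂ

/-- The induced action of `g ∈ SL(3,ℂ)` on `ℙ²(ℂ)`, via the linear action of `g`
on column vectors `(x0,x1,x2)ᵀ`. -/
def act (g : SL3) : P2 → P2 :=
  Projectivization.map (Matrix.SpecialLinearGroup.toLin' g).toLinearMap
    (Matrix.SpecialLinearGroup.toLin' g).injective

/-- The line `l_A = {x0 = 0}`. -/
def lA : Set P2 := lineSet ![1, 0, 0]

open Matrix Projectivization

theorem Matrix.exists_eq_smul_of_forall_dotProduct_eq_zero {K ι : Type*} [Field K] [Fintype ι]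
    [DecidableEq ι] {b b' : ι → K} (hb : b ≠ 0)
    (h : ∀ v, b ⬝ᵥ v = 0 → b' ⬝ᵥ v = 0) : ∃ μ : K, b' = μ • b := by
  obtain ⟨k, hk⟩ := Function.ne_iff.mp hb
  refine ⟨b' k / b k, funext fun j => ?_⟩
  have hv := h (b k • Pi.single j 1 - b j • Pi.single k 1) (by
    simp only [dotProduct_sub, dotProduct_smul, dotProduct_single, mul_one, smul_eq_mul]; ring)
  simp only [dotProduct_sub, dotProduct_smul, dotProduct_single, mul_one, smul_eq_mul] at hv
  rw [Pi.smul_apply, smul_eq_mul, div_mul_eq_mul_div, eq_div_iff hk]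
  linear_combination hv

lemma mem_lineSet_iff {b : Fin 3 → ℂ} {p : P2} : p ∈ lineSet b ↔ b ⬝ᵥ p.rep = 0 := by
  simp [lineSet, dotProduct, Fin.sum_univ_three]

lemma mk_mem_lineSet_iff {b v : Fin 3 → ℂ} (hv : v ≠ 0) :
    mk ℂ v hv ∈ lineSet b ↔ b ⬝ᵥ v = 0 := by
  obtain ⟨t, ht⟩ := exists_smul_eq_mk_rep ℂ v hv
  rw [mem_lineSet_iff, ← ht, dotProduct_smul, smul_eq_zero_iff_eq]

lemma lineSet_smul {μ : ℂ} (hμ : μ ≠ 0) (b : Fin 3 → ℂ) :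
    lineSet (μ • b) = lineSet b := by
  ext p
  simp only [mem_lineSet_iff, smul_dotProduct, smul_eq_mul, mul_eq_zero, hμ, false_or]

lemma exists_eq_smul_of_lineSet_subset {b b' : Fin 3 → ℂ} (hb : b ≠ 0)
    (h : lineSet b ⊆ lineSet b') : ∃ μ : ℂ, b' = μ • b := by
  refine exists_eq_smul_of_forall_dotProduct_eq_zero hb fun v hv => ?_
  rcases eq_or_ne v 0 with rfl | hv0
  · exact dotProduct_zero b'
  · exact (mk_mem_lineSet_iff hv0).mp (h ((mk_mem_lineSet_iff hv0).mpr hv))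

lemma act_bijective (g : SL3) : Function.Bijective (act g) :=
  MulAction.bijective g

lemma preimage_act_lineSet (g : SL3) (c : Fin 3 → ℂ) :
    act g ⁻¹' lineSet c = lineSet (c ᵥ* (g : Matrix (Fin 3) (Fin 3) ℂ)) := by
  ext p
  rw [← p.mk_rep, Set.mem_preimage, act, map_mk, mk_mem_lineSet_iff, mk_mem_lineSet_iff,
    ← dotProduct_mulVec]
  rfl

lemma image_act_lineSet_eq_iff (g : SL3) (b c : Fin 3 → ℂ) :
    act g '' lineSet b = lineSet c ↔
      lineSet b = lineSet (c ᵥ* (g : Matrix (Fin 3) (Fin 3) ℂ)) := by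
  rw [← preimage_act_lineSet, eq_comm (a := lineSet b),
    Set.preimage_eq_iff_eq_image (act_bijective g), eq_comm]

lemma image_act_lineSet_of_vecMul_eq_smul (g : SL3) {b c : Fin 3 → ℂ} {μ : ℂ}
    (hμ : μ ≠ 0) (h : c ᵥ* (g : Matrix (Fin 3) (Fin 3) ℂ) = μ • b) :
    act g '' lineSet b = lineSet c := by
  rw [image_act_lineSet_eq_iff, h, lineSet_smul hμ]

lemma exists_vecMul_eq_smul_of_image_act_lineSet {g : SL3} {b c : Fin 3 → ℂ} (hb : b ≠ 0)
    (hc : c ≠ 0) (h : act g '' lineSet b = lineSet c) :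
    ∃ μ : ℂ, μ ≠ 0 ∧ c ᵥ* (g : Matrix (Fin 3) (Fin 3) ℂ) = μ • b := by
  obtain ⟨μ, hμ⟩ :=
    exists_eq_smul_of_lineSet_subset hb ((image_act_lineSet_eq_iff g b c).mp h).le
  have hcg : c ᵥ* (g : Matrix (Fin 3) (Fin 3) ℂ) ≠ 0 := by
    intro h0
    simpa using exists_vecMul_eq_zero_iff.mp ⟨c, hc, h0⟩
  exact ⟨μ, by rintro rfl; exact hcg (by simpa using hμ), hμ⟩

lemma exists_vecMul_apply_of_image_act_eq_self {g : SL3} (hA : act g '' lA = lA)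
    (h2 : act g '' lineSet ![0, 0, 1] = lineSet ![0, 0, 1])
    (h12 : act g '' lineSet ![0, 1, -1] = lineSet ![0, 1, -1]) :
    ∃ α δ : ℂ, α ≠ 0 ∧ δ ≠ 0 ∧ ∀ c : Fin 3 → ℂ,
      (c ᵥ* (g : Matrix (Fin 3) (Fin 3) ℂ)) 0 = α * c 0 ∧
      (c ᵥ* (g : Matrix (Fin 3) (Fin 3) ℂ)) 1 = δ * c 1 := by
  obtain ⟨α, hα, eA⟩ := exists_vecMul_eq_smul_of_image_act_lineSet (by simp) (by simp) hA
  obtain ⟨γ, -, e2⟩ := exists_vecMul_eq_smul_of_image_act_lineSet (by simp) (by simp) h2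
  obtain ⟨δ, hδ, e12⟩ := exists_vecMul_eq_smul_of_image_act_lineSet (by simp) (by simp) h12
  refine ⟨α, δ, hα, hδ, fun c => ?_⟩
  have hc : c = c 0 • ![1, 0, 0] + c 1 • ![0, 1, -1] + (c 1 + c 2) • ![0, 0, 1] := by
    ext i; fin_cases i <;> simp
  rw [hc, add_vecMul, add_vecMul, smul_vecMul, smul_vecMul, smul_vecMul, eA, e2, e12]
  simp [mul_comm]

lemma mul_eq_mul_of_image_act_lineSet {g : SL3} {α δ : ℂ}
    (hg : ∀ c : Fin 3 → ℂ, (c ᵥ* (g : Matrix (Fin 3) (Fin 3) ℂ)) 0 = α * c 0 ∧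
      (c ᵥ* (g : Matrix (Fin 3) (Fin 3) ℂ)) 1 = δ * c 1)
    {x x' y : ℂ} (h : act g '' lineSet ![x, 1, y] = lineSet ![x', 1, y]) : α * x' = δ * x := by
  obtain ⟨μ, -, e⟩ := exists_vecMul_eq_smul_of_image_act_lineSet (by simp) (by simp) h
  obtain ⟨h0, h1⟩ := hg ![x', 1, y]
  rw [e] at h0 h1
  simp only [Pi.smul_apply, cons_val_zero, smul_eq_mul, cons_val_one, mul_one] at h0 h1
  rw [← h0, h1]

lemma exists_image_act_lineSet_eq_scale {lam : ℂ} (hlam : lam ≠ 0) :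
    ∃ g : SL3, ∀ x y z : ℂ, act g '' lineSet ![x, y, z] = lineSet ![lam * x, y, z] := by
  obtain ⟨d, hd⟩ := IsAlgClosed.exists_pow_nat_eq lam three_pos
  have hd0 : d ≠ 0 := by rintro rfl; exact hlam (by simpa using hd.symm)
  refine ⟨⟨diagonal ![d / lam, d, d], ?_⟩, fun x y z => ?_⟩
  · simp only [det_diagonal, Fin.prod_univ_three, cons_val_zero, cons_val_one, cons_val]
    field_simp
    linear_combination hd
  · refine image_act_lineSet_of_vecMul_eq_smul _ hd0 ?_
    ext j
    fin_cases j <;> simp [vecMul_diagonal] <;> field_simp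

lemma forall_fin_of_castLE_of_last {m k : ℕ} (hmk : m + 1 = k) {P : Fin k → Prop}
    (hcast : ∀ i : Fin m, P (Fin.castLE (by omega) i)) (hlast : P ⟨m, by omega⟩) :
    ∀ j, P j := by
  subst hmk
  exact Fin.lastCases hlast hcast

/-- let `n ≥ 4` and let `a_1, …, a_{n−3}` be pairwise distinct complex
numbers, each different from `0` and `1`.  For `s ∈ ℂ^{n−2}` consider the lines
`l_i(s) = {x1 − a_i·x2 + s_i·x0 = 0}` (`1 ≤ i ≤ n−3`),
`l_{n−2}(s) = {s_{n−2}·x0 + x1 = 0}`, `l_{n−1} = {x2 = 0}`, `l_n = {x1 − x2 = 0}`,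
and `l_A = {x0 = 0}`.  Then some `g ∈ SL(3,ℂ)` maps `l_A` to `l_A` and `l_i(s)` to
`l_i(s')` for every `i = 1, …, n`, iff `s' = λ·s` for some `λ ∈ ℂ ∖ {0}`. -/
theorem stmt10 (n : ℕ) (hn : 4 ≤ n)
    (a : Fin (n - 3) → ℂ)
    (s s' : Fin (n - 2) → ℂ) :
    (∃ g : SL3,
      act g '' lA = lA ∧
      (∀ i : Fin (n - 3),
        act g '' lineSet ![s (Fin.castLE (by omega) i), 1, -(a i)] =
          lineSet ![s' (Fin.castLE (by omega) i), 1, -(a i)]) ∧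
      act g '' lineSet ![s ⟨n - 3, by omega⟩, 1, 0] =
        lineSet ![s' ⟨n - 3, by omega⟩, 1, 0] ∧
      act g '' lineSet ![0, 0, 1] = lineSet ![0, 0, 1] ∧
      act g '' lineSet ![0, 1, -1] = lineSet ![0, 1, -1]) ↔
    ∃ lam : ℂ, lam ≠ 0 ∧ ∀ j, s' j = lam * s j := by
  constructor
  · rintro ⟨g, hA, hcast, hlast, h2, h12⟩
    obtain ⟨α, δ, hα, hδ, hg⟩ := exists_vecMul_apply_of_image_act_eq_self hA h2 h12
    refine ⟨δ / α, div_ne_zero hδ hα, fun j => ?_⟩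
    have key : α * s' j = δ * s j :=
      forall_fin_of_castLE_of_last (P := fun j => α * s' j = δ * s j) (by omega)
        (fun i => mul_eq_mul_of_image_act_lineSet hg (hcast i))
        (mul_eq_mul_of_image_act_lineSet hg hlast) j
    field_simp
    linear_combination key
  · rintro ⟨lam, hlam, hs⟩
    obtain ⟨g, hg⟩ := exists_image_act_lineSet_eq_scale hlam
    refine ⟨g, ?_, fun i => ?_, ?_, ?_, ?_⟩ <;> simp only [lA, hg, hs, mul_zero]
    simpa using lineSet_smul hlam ![1, 0, 0]
end
end

section
/- Let G ⊆ SL(3,ℂ) be the subgroup of matrices [[t⁻²,0,0],[s₀,t,0],[s₁,0,t]] with t ∈ ℂ ∖ {0} and s₀,s₁ ∈ ℂ. Suppose g ∈ G maps each of three lines ℓ_1, ℓ_2, ℓ_3 of ℙ²(ℂ) to itself, where the three lines have no common point and none of them equals l_A = {x0 = 0}. Then g is a scalar matrix ω·I with ω³ = 1; in particular, g acts as the identity on ℙ²(ℂ). -/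
noncomputable section

/-- A subset of `ℙ²(ℂ)` is a line if it is the zero set of a nonzero linear form. -/
def IsLine (L : Set P2) : Prop := ∃ b : Fin 3 → ℂ, b ≠ 0 ∧ L = lineSet b

/-- The subgroup `G ⊆ SL(3,ℂ)` of matrices `[[t⁻²,0,0],[s₀,t,0],[s₁,0,t]]`
with `t ≠ 0`, i.e. the pointwise stabilizer of `l_A`. -/
def Gset : Set SL3 :=
  {g : SL3 | ∃ t s₀ s₁ : ℂ, t ≠ 0 ∧
    (g : Matrix (Fin 3) (Fin 3) ℂ) = !![(t ^ 2)⁻¹, 0, 0; s₀, t, 0; s₁, 0, t]}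

/-- Membership of `[v]` in `lineSet b` in terms of `v`. -/
lemma mem_lineSet_mk (b v : Fin 3 → ℂ) (hv : v ≠ 0) :
    Projectivization.mk ℂ v hv ∈ lineSet b ↔
      b 0 * v 0 + b 1 * v 1 + b 2 * v 2 = 0 := by
  obtain ⟨a, ha⟩ := Projectivization.exists_smul_eq_mk_rep ℂ v hv
  have hrep : ∀ i, (Projectivization.mk ℂ v hv).rep i = (a : ℂ) * v i := by
    intro i; rw [← ha]; rfl
  have : Projectivization.mk ℂ v hv ∈ lineSet b ↔
      (a : ℂ) * (b 0 * v 0 + b 1 * v 1 + b 2 * v 2) = 0 := by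
    simp only [lineSet, Set.mem_setOf_eq, hrep]; constructor <;> intro h <;> linear_combination h
  rw [this, mul_eq_zero]
  simp [a.ne_zero]

lemma act_mk (g : SL3) (v : Fin 3 → ℂ) (hv : v ≠ 0) :
    act g (Projectivization.mk ℂ v hv) =
      Projectivization.mk ℂ ((g : Matrix (Fin 3) (Fin 3) ℂ).mulVec v)
        (by
          intro h
          exact hv ((Matrix.SpecialLinearGroup.toLin' g).map_eq_zero_iff.mp
            (by simpa [Matrix.SpecialLinearGroup.toLin'_apply, Matrix.toLin'_apply] using h))) := by
  unfold act
  rw [Projectivization.map_mk]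
  congr 1

/-- The key per-line computation: if `g ∈ G` (with data `t, s₀, s₁`) maps the line of
`b` into itself, and the line is not `l_A`, then `b` pairs to zero with the vector
`(t⁻²-t, s₀, s₁)`. -/
lemma key_line (g : SL3) (t s₀ s₁ : ℂ) (ht : t ≠ 0)
    (hmat : (g : Matrix (Fin 3) (Fin 3) ℂ) = !![(t ^ 2)⁻¹, 0, 0; s₀, t, 0; s₁, 0, t])
    (b : Fin 3 → ℂ) (hb12 : ¬ (b 1 = 0 ∧ b 2 = 0))
    (hsub : act g '' lineSet b ⊆ lineSet b) :
    b 0 * ((t ^ 2)⁻¹ - t) + b 1 * s₀ + b 2 * s₁ = 0 := by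
  -- the transported linear form
  set B : ℂ := (t ^ 2)⁻¹ * b 0 + s₀ * b 1 + s₁ * b 2 with hB
  -- general principle: b vanishing on v implies it vanishes on g v
  have H : ∀ v : Fin 3 → ℂ, v ≠ 0 → b 0 * v 0 + b 1 * v 1 + b 2 * v 2 = 0 →
      B * v 0 + t * b 1 * v 1 + t * b 2 * v 2 = 0 := by
    intro v hv hbv
    have hmem : Projectivization.mk ℂ v hv ∈ lineSet b := (mem_lineSet_mk b v hv).mpr hbv
    have := hsub ⟨_, hmem, rfl⟩
    rw [act_mk] at this
    rw [mem_lineSet_mk] at this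
    have hmv : ∀ i, (g : Matrix (Fin 3) (Fin 3) ℂ).mulVec v i =
        (!![(t ^ 2)⁻¹, 0, 0; s₀, t, 0; s₁, 0, t]).mulVec v i := by rw [hmat]; intro i; rfl
    rw [hmv 0, hmv 1, hmv 2] at this
    simp [Matrix.mulVec, dotProduct, Fin.sum_univ_three] at this
    linear_combination this
  -- cross relations via test vectors
  have cross : ∀ j : Fin 3, ∀ w : ℂ, b j * w = b 0 * t * b j →
      (∀ v : Fin 3 → ℂ, True) → True := fun _ _ _ _ => trivial
  have c1 : b 1 * B = b 0 * (t * b 1) := by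
    by_cases h01 : b 0 = 0 ∧ b 1 = 0
    · rw [h01.1, h01.2]; ring
    · have hv : (![b 1, -b 0, 0] : Fin 3 → ℂ) ≠ 0 := by
        intro h
        exact h01 ⟨by have := congrFun h 1; simpa using neg_eq_zero.mp this,
          by simpa using congrFun h 0⟩
      have := H ![b 1, -b 0, 0] hv (by simp; ring)
      simp at this
      linear_combination this
  have c2 : b 2 * B = b 0 * (t * b 2) := by
    by_cases h02 : b 0 = 0 ∧ b 2 = 0
    · rw [h02.1, h02.2]; ring
    · have hv : (![b 2, 0, -b 0] : Fin 3 → ℂ) ≠ 0 := by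
        intro h
        exact h02 ⟨by have := congrFun h 2; simpa using neg_eq_zero.mp this,
          by simpa using congrFun h 0⟩
      have := H ![b 2, 0, -b 0] hv (by simp; ring)
      simp at this
      linear_combination this
  rcases not_and_or.mp hb12 with h1 | h2
  · -- b 1 ≠ 0
    have hBe : B = b 0 * t := mul_left_cancel₀ h1 (by linear_combination c1)
    rw [hB] at hBe
    linear_combination hBe
  · have hBe : B = b 0 * t := mul_left_cancel₀ h2 (by linear_combination c2)
    rw [hB] at hBe
    linear_combination hBe

/-- if `g ∈ G` maps each of three lines `ℓ₁, ℓ₂, ℓ₃` of `ℙ²(ℂ)` to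
itself, where the three lines have no common point and none equals `l_A`, then `g` is
a scalar matrix `ω·I` with `ω³ = 1`; in particular `g` acts as the identity on
`ℙ²(ℂ)`. -/
theorem stmt12 (g : SL3) (hg : g ∈ Gset)
    (L₁ L₂ L₃ : Set P2) (h₁ : IsLine L₁) (h₂ : IsLine L₂) (h₃ : IsLine L₃)
    (hcommon : ¬ ∃ p : P2, p ∈ L₁ ∧ p ∈ L₂ ∧ p ∈ L₃)
    (hA₁ : L₁ ≠ lA) (hA₂ : L₂ ≠ lA) (hA₃ : L₃ ≠ lA)
    (hm₁ : act g '' L₁ = L₁) (hm₂ : act g '' L₂ = L₂) (hm₃ : act g '' L₃ = L₃) :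
    (∃ ω : ℂ, ω ^ 3 = 1 ∧
      (g : Matrix (Fin 3) (Fin 3) ℂ) = ω • (1 : Matrix (Fin 3) (Fin 3) ℂ)) ∧
    ∀ p : P2, act g p = p := by
  obtain ⟨t, s₀, s₁, ht, hmat⟩ := hg
  obtain ⟨b₁, hb₁, rfl⟩ := h₁
  obtain ⟨b₂, hb₂, rfl⟩ := h₂
  obtain ⟨b₃, hb₃, rfl⟩ := h₃
  -- none of the b's has b1 = b2 = 0
  have hne : ∀ b : Fin 3 → ℂ, b ≠ 0 → lineSet b ≠ lA → ¬ (b 1 = 0 ∧ b 2 = 0) := by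
    rintro b hb hbA ⟨e1, e2⟩
    apply hbA
    have hb0 : b 0 ≠ 0 := by
      intro e0
      apply hb
      funext i
      fin_cases i <;> assumption
    ext p
    simp only [lineSet, lA, Set.mem_setOf_eq, e1, e2]
    constructor
    · intro h
      simp only [Matrix.cons_val_zero, Matrix.cons_val_one, Matrix.head_cons]
      have : b 0 * p.rep 0 = 0 := by linear_combination h
      rcases mul_eq_zero.mp this with h' | h'
      · exact absurd h' hb0
      · simp [Matrix.cons_val_zero, h']
    · intro h
      simp only [Matrix.cons_val_zero, Matrix.cons_val_one, Matrix.head_cons] at h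
      have : p.rep 0 = 0 := by
        simpa using h
      rw [this]; ring
  have e₁ := key_line g t s₀ s₁ ht hmat b₁ (hne b₁ hb₁ hA₁) (hm₁.le)
  have e₂ := key_line g t s₀ s₁ ht hmat b₂ (hne b₂ hb₂ hA₂) (hm₂.le)
  have e₃ := key_line g t s₀ s₁ ht hmat b₃ (hne b₃ hb₃ hA₃) (hm₃.le)
  -- the vector c = (t⁻² - t, s₀, s₁) must be zero, else it is a common point
  have hc : (![(t ^ 2)⁻¹ - t, s₀, s₁] : Fin 3 → ℂ) = 0 := by
    by_contra hc
    apply hcommon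
    refine ⟨Projectivization.mk ℂ _ hc, ?_, ?_, ?_⟩ <;>
      rw [mem_lineSet_mk] <;> simp <;> first
        | linear_combination e₁ | linear_combination e₂ | linear_combination e₃
  have hc0 : (t ^ 2)⁻¹ = t := by
    have := congrFun hc 0; simp at this; linear_combination this
  have hs0 : s₀ = 0 := by have := congrFun hc 1; simpa using this
  have hs1 : s₁ = 0 := by have := congrFun hc 2; simpa using this
  have ht3 : t ^ 3 = 1 := by
    have h2 : (t ^ 2) * (t ^ 2)⁻¹ = 1 := mul_inv_cancel₀ (pow_ne_zero 2 ht)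
    rw [hc0] at h2
    linear_combination h2
  have hmat' : (g : Matrix (Fin 3) (Fin 3) ℂ) = t • (1 : Matrix (Fin 3) (Fin 3) ℂ) := by
    rw [hmat, hc0, hs0, hs1]
    ext i j
    fin_cases i <;> fin_cases j <;>
      simp [Matrix.one_apply, Matrix.vecHead, Matrix.vecTail]
  refine ⟨⟨t, ht3, hmat'⟩, ?_⟩
  intro p
  conv_lhs => rw [← p.mk_rep]
  rw [act_mk]
  have hmv : (g : Matrix (Fin 3) (Fin 3) ℂ).mulVec p.rep = t • p.rep := by
    rw [hmat', Matrix.smul_mulVec, Matrix.one_mulVec]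
  conv_rhs => rw [← p.mk_rep]
  rw [Projectivization.mk_eq_mk_iff]
  exact ⟨Units.mk0 t ht, by simpa [Units.smul_def] using hmv.symm⟩
end
end
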